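/- For D ⊆ [n]² and S ⊆ U ⊆ [n], we have π_{D,S}⁻¹(S) ⊆ π_{D,U}⁻¹(U). -/

import Mathlib

namespace Schub

/-- The `n × n` grid `[n]²` (1-based). -/
def grid (n : ℕ) : Finset (ℕ × ℕ) := Finset.Icc 1 n ×ˢ Finset.Icc 1 n

/-- State of the bracket-matching stack in column `c` after reading rows `1,…,r`:
the set of rows that contributed a so-far unmatched `'('`. -/
def openRows (D : Finset (ℕ × ℕ)) (S : Finset ℕ) (c : ℕ) : ℕ → Finset ℕ
  | 0 => ∅
  | r + 1 =>
    let st := openRows D S c r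
    if (r + 1, c) ∉ D ∧ r + 1 ∈ S then insert (r + 1) st
    else if (r + 1, c) ∈ D ∧ r + 1 ∉ S then
      (if h : st.Nonempty then st.erase (st.max' h) else st)
    else st

/-- The label of box `(r,c)` in the tableau `π_{D,S}`. -/
def piLabel (D : Finset (ℕ × ℕ)) (S : Finset ℕ) (r c : ℕ) : Option ℕ :=
  if (r, c) ∈ D then
    if r ∈ S then some r
    else if h : (openRows D S c (r - 1)).Nonempty then
      some ((openRows D S c (r - 1)).max' h)
    else none
  else none

/-- `θ_D^c(S)`: number of `⋆`'s plus matched `()` pairs in `word_{c,S}(D)`. -/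
def thetaCol (n : ℕ) (D : Finset (ℕ × ℕ)) (S : Finset ℕ) (c : ℕ) : ℕ :=
  ((Finset.Icc 1 n).filter fun r => (r, c) ∈ D ∧ r ∈ S).card +
  ((Finset.Icc 1 n).filter fun r =>
      (r, c) ∈ D ∧ r ∉ S ∧ (openRows D S c (r - 1)).Nonempty).card

/-- `θ_D(S) = Σ_c θ_D^c(S)`. -/
def theta (n : ℕ) (D : Finset (ℕ × ℕ)) (S : Finset ℕ) : ℕ :=
  ∑ c ∈ Finset.Icc 1 n, thetaCol n D S c

/-- `π_{D,S}⁻¹(S)`: boxes of `D` whose `π_{D,S}`-label lies in `S`. -/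
def piInv (D : Finset (ℕ × ℕ)) (S : Finset ℕ) : Finset (ℕ × ℕ) :=
  D.filter fun b => ∃ s ∈ S, piLabel D S b.1 b.2 = some s

/-- `τ` is a tableau of shape `D` with labels in `[n] ∪ {∘}`. -/
def IsTab (n : ℕ) (D : Finset (ℕ × ℕ)) (τ : ℕ × ℕ → Option ℕ) : Prop :=
  (∀ b, b ∉ D → τ b = none) ∧ ∀ b ∈ D, ∀ l, τ b = some l → l ∈ Finset.Icc 1 n

/-- Flagged: any label in row `r` is `≤ r`. -/
def Flagged (D : Finset (ℕ × ℕ)) (τ : ℕ × ℕ → Option ℕ) : Prop :=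
  ∀ b ∈ D, ∀ l, τ b = some l → l ≤ b.1

/-- Column-injective: labels in each column are distinct. -/
def ColInj (D : Finset (ℕ × ℕ)) (τ : ℕ × ℕ → Option ℕ) : Prop :=
  ∀ b ∈ D, ∀ b' ∈ D, b.2 = b'.2 → b ≠ b' → ∀ l, τ b = some l → τ b' ≠ some l

/-- `τ⁻¹(S)`: boxes of `D` whose label lies in `S`. -/
def labInv (D : Finset (ℕ × ℕ)) (τ : ℕ × ℕ → Option ℕ) (S : Finset ℕ) : Finset (ℕ × ℕ) :=
  D.filter fun b => ∃ s ∈ S, τ b = some s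

/-- `τ` has content `α`. -/
def HasContent (n : ℕ) (D : Finset (ℕ × ℕ)) (τ : ℕ × ℕ → Option ℕ) (α : ℕ → ℕ) : Prop :=
  ∀ i ∈ Finset.Icc 1 n, (D.filter fun b => τ b = some i).card = α i

/-- Membership in `FCITab(D,α)`. -/
def IsFCI (n : ℕ) (D : Finset (ℕ × ℕ)) (τ : ℕ × ℕ → Option ℕ) (α : ℕ → ℕ) : Prop :=
  IsTab n D τ ∧ Flagged D τ ∧ ColInj D τ ∧ HasContent n D τ α

/-- Membership in `PerfectTab(D,α)`: additionally no box is unlabelled. -/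
def IsPerfect (n : ℕ) (D : Finset (ℕ × ℕ)) (τ : ℕ × ℕ → Option ℕ) (α : ℕ → ℕ) : Prop :=
  IsFCI n D τ α ∧ ∀ b ∈ D, τ b ≠ none

/-- The (lattice point) membership in the Schubitope `S_D`. -/
def InSchubitope (n : ℕ) (D : Finset (ℕ × ℕ)) (α : ℕ → ℕ) : Prop :=
  (∑ i ∈ Finset.Icc 1 n, α i) = D.card ∧
  ∀ S ⊆ Finset.Icc 1 n, (∑ i ∈ S, α i) ≤ theta n D S

/-- Membership in the polytope `P(D,α)`. -/
def InP (n : ℕ) (D : Finset (ℕ × ℕ)) (α : ℕ → ℝ) (x : ℕ → ℕ → ℝ) : Prop :=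
  (∀ i ∈ Finset.Icc 1 n, ∀ j ∈ Finset.Icc 1 n, 0 ≤ x i j ∧ x i j ≤ 1) ∧
  (∀ i ∈ Finset.Icc 1 n, (∑ j ∈ Finset.Icc 1 n, x i j) = α i) ∧
  (∀ j ∈ Finset.Icc 1 n, ∀ s ∈ Finset.Icc 1 n,
    ((D.filter fun b => b.2 = j ∧ b.1 ≤ s).card : ℝ) ≤ ∑ i ∈ Finset.Icc 1 s, x i j)

lemma openRows_succ (D : Finset (ℕ × ℕ)) (S : Finset ℕ) (c r : ℕ) :
    openRows D S c (r + 1) =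
      if (r + 1, c) ∉ D ∧ r + 1 ∈ S then insert (r + 1) (openRows D S c r)
      else if (r + 1, c) ∈ D ∧ r + 1 ∉ S then
        (if h : (openRows D S c r).Nonempty then
          (openRows D S c r).erase ((openRows D S c r).max' h)
        else openRows D S c r)
      else openRows D S c r := rfl

lemma openRows_le (D : Finset (ℕ × ℕ)) (S : Finset ℕ) (c : ℕ) :
    ∀ r, ∀ x ∈ openRows D S c r, x ≤ r := by
  intro r
  induction r with
  | zero => simp [openRows]
  | succ r ih =>
    intro x hx
    rw [openRows_succ] at hx
    split_ifs at hx with h1 h2 h3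
    · rcases Finset.mem_insert.mp hx with h | h
      · omega
      · exact (ih x h).trans (Nat.le_succ r)
    · exact (ih x (Finset.mem_of_mem_erase hx)).trans (Nat.le_succ r)
    · exact (ih x hx).trans (Nat.le_succ r)
    · exact (ih x hx).trans (Nat.le_succ r)

lemma openRows_mem (D : Finset (ℕ × ℕ)) (S : Finset ℕ) (c : ℕ) :
    ∀ r, ∀ x ∈ openRows D S c r, x ∈ S := by
  intro r
  induction r with
  | zero => simp [openRows]
  | succ r ih =>
    intro x hx
    rw [openRows_succ] at hx
    split_ifs at hx with h1 h2 h3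
    · rcases Finset.mem_insert.mp hx with h | h
      · exact h ▸ h1.2
      · exact ih x h
    · exact ih x (Finset.mem_of_mem_erase hx)
    · exact ih x hx
    · exact ih x hx

lemma openRows_card_mono (D : Finset (ℕ × ℕ)) (S U : Finset ℕ) (hSU : S ⊆ U) (c : ℕ) :
    ∀ r, (openRows D S c r).card ≤ (openRows D U c r).card := by
  intro r
  induction r with
  | zero => simp [openRows]
  | succ r ih =>
    rw [openRows_succ, openRows_succ]
    have hSr : r + 1 ∉ openRows D S c r := fun h => by
      have := openRows_le D S c r _ h; omega
    have hUr : r + 1 ∉ openRows D U c r := fun h => by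
      have := openRows_le D U c r _ h; omega
    by_cases hD : (r + 1, c) ∈ D
    · simp only [hD, not_true, false_and, if_false, true_and]
      by_cases hS : r + 1 ∈ S
      · have hU : r + 1 ∈ U := hSU hS
        simp [hS, hU, ih]
      · simp only [hS, not_false_iff, if_true]
        by_cases hU : r + 1 ∈ U
        · simp only [hU, not_true, if_false]
          split_ifs with h
          · calc ((openRows D S c r).erase _).card ≤ (openRows D S c r).card :=
                Finset.card_erase_le
              _ ≤ _ := ih
          · exact ih
        · simp only [hU, not_false_iff, if_true]
          split_ifs with h1 h2
          · rw [Finset.card_erase_of_mem (Finset.max'_mem _ h1),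
              Finset.card_erase_of_mem (Finset.max'_mem _ h2)]
            omega
          · exact absurd (Finset.card_pos.mp (lt_of_lt_of_le (Finset.card_pos.mpr h1) ih)) h2
          · simp [Finset.not_nonempty_iff_eq_empty.mp h1]
          · exact ih
    · simp only [hD, not_false_iff, true_and, false_and, if_false]
      by_cases hS : r + 1 ∈ S
      · have hU : r + 1 ∈ U := hSU hS
        simp only [hS, hU, if_true]
        rw [Finset.card_insert_of_notMem hSr, Finset.card_insert_of_notMem hUr]
        omega
      · simp only [hS, if_false]
        by_cases hU : r + 1 ∈ U
        · simp only [hU, if_true]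
          rw [Finset.card_insert_of_notMem hUr]
          omega
        · simp [hU, ih]

/-- For `D ⊆ [n]²` and `S ⊆ U ⊆ [n]`, `π_{D,S}⁻¹(S) ⊆ π_{D,U}⁻¹(U)`. -/
theorem piInv_subset (n : ℕ) (D : Finset (ℕ × ℕ)) (hD : D ⊆ grid n)
    (S U : Finset ℕ) (hSU : S ⊆ U) (hU : U ⊆ Finset.Icc 1 n) :
    piInv D S ⊆ piInv D U := by
  intro b hb
  obtain ⟨r, c⟩ := b
  rw [piInv, Finset.mem_filter] at hb
  obtain ⟨hbD, s, hsS, hlab⟩ := hb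
  rw [piInv, Finset.mem_filter]
  refine ⟨hbD, ?_⟩
  rw [piLabel, if_pos hbD] at hlab
  by_cases hrU : r ∈ U
  · exact ⟨r, hrU, by rw [piLabel, if_pos hbD, if_pos hrU]⟩
  · have hrS : r ∉ S := fun h => hrU (hSU h)
    rw [if_neg hrS] at hlab
    have hne : (openRows D S c (r - 1)).Nonempty := by
      by_contra h
      rw [dif_neg h] at hlab
      exact Option.some_ne_none s hlab.symm
    have hUne : (openRows D U c (r - 1)).Nonempty := by
      rw [← Finset.card_pos]
      exact lt_of_lt_of_le (Finset.card_pos.mpr hne)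
        (openRows_card_mono D S U hSU c (r - 1))
    refine ⟨(openRows D U c (r - 1)).max' hUne,
      openRows_mem D U c (r - 1) _ (Finset.max'_mem _ hUne), ?_⟩
    rw [piLabel, if_pos hbD, if_neg hrU, dif_pos hUne]

end Schub
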